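/- Let c, c' ∈ Σ and let P be a (possibly empty) string such that the string cPc' is a minimal unique substring of T. Then the node u_P is explicit, i.e., |children(P)| ≥ 2. -/

import Mathlib

/-- 1-based access to the `i`-th character of `T`. -/
def idx (T : List ℕ) (i : ℕ) : ℕ := T.getD (i - 1) 0

/-- The suffix `T[i..n]` (1-based). -/
def sufx (T : List ℕ) (i : ℕ) : List ℕ := T.drop (i - 1)

/-- Occurrence positions of `P` in `T`: `Occ(T,P) = {i ∈ [1, n−|P|+1] : P = T[i..i+|P|−1]}`. -/
def OccF (T P : List ℕ) : Finset ℕ :=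
  (Finset.Icc 1 (T.length - P.length + 1)).filter (fun i => P <+: T.drop (i - 1))

/-- `children(P) = {Pc : c ∈ Σ, Pc is a substring of T}`. -/
def childrenSet (σ : ℕ) (T P : List ℕ) : Set (List ℕ) :=
  {Q | ∃ c ∈ Finset.Icc 1 σ, Q = P ++ [c] ∧ (P ++ [c]) <:+: T}

/-- Starting positions of the maximal runs of equal characters in `L[1..n]`. -/
def SstartSet (n : ℕ) (L : ℕ → ℕ) : Finset ℕ :=
  (Finset.Icc 1 n).filter (fun i => i = 1 ∨ L i ≠ L (i - 1))

/-- `rank(S, i) = |{j ∈ S : j ≤ i}|`. -/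
def rankOf (S : Finset ℕ) (i : ℕ) : ℕ := (S.filter (fun j => j ≤ i)).card

/-- `(c, p, q)` is an answer of the range distinct query `RD(S, b, e)`:
`c` occurs in `S[b..e]`, and `p`, `q` are the first and last occurrences of `c` in `[b,e]`. -/
def RDmem (S : ℕ → ℕ) (b e c p q : ℕ) : Prop :=
  p ∈ Finset.Icc b e ∧ S p = c ∧ (∀ i ∈ Finset.Icc b e, S i = c → p ≤ i) ∧
  q ∈ Finset.Icc b e ∧ S q = c ∧ (∀ i ∈ Finset.Icc b e, S i = c → i ≤ q)

/-- `[b,e]` is the suffix-tree interval of `P`: the positions `i ∈ [1,n]` whose suffix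
`T[SA[i]..n]` has `P` as a prefix are exactly `{b,…,e}`. -/
def isIntervalOf (n : ℕ) (T : List ℕ) (SA : ℕ → ℕ) (P : List ℕ) (b e : ℕ) : Prop :=
  1 ≤ b ∧ e ≤ n ∧ ∀ i ∈ Finset.Icc 1 n, (P <+: sufx T (SA i) ↔ i ∈ Finset.Icc b e)

/-- Length of the longest common prefix of two lists. -/
def lcpLen : List ℕ → List ℕ → ℕ
  | a :: as, b :: bs => if a = b then lcpLen as bs + 1 else 0
  | _, _ => 0

/-- `𝓛_t`: substrings of `T` of length `t` whose suffix-tree node is explicit. -/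
def LsetD (σ t : ℕ) (T : List ℕ) : Set (List ℕ) :=
  {P | P <:+: T ∧ P.length = t ∧ 2 ≤ (childrenSet σ T P).ncard}

/-- `K_t = ⋃_{P ∈ 𝓛_t} children(P)`. -/
def KsetD (σ t : ℕ) (T : List ℕ) : Set (List ℕ) :=
  {Q | ∃ P ∈ LsetD σ t T, Q ∈ childrenSet σ T P}

/-- `K'_t`: members of `K_t` that are not the last child of their parent, i.e. whose
interval has a right endpoint different from that of the parent's interval. -/
def KpsetD (σ n t : ℕ) (T : List ℕ) (SA : ℕ → ℕ) : Set (List ℕ) :=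
  {Q | ∃ P ∈ LsetD σ t T, Q ∈ childrenSet σ T P ∧
    ∃ b e b' e' : ℕ, isIntervalOf n T SA P b e ∧ isIntervalOf n T SA Q b' e' ∧ e' ≠ e}

/-!
Of the at least two occurrences of `cP`, only one is followed by `c'`. Another one is not a
suffix of `T`: otherwise `cP` would end with the unique final letter `$`, which cannot happen
since `cPc'` occurs in `T`. So that occurrence is followed by some letter `d ≠ c'`, and
`Pc'`, `Pd` are two distinct children of `P`.
-/

theorem List.IsInfix.dropLast_of_append_singleton {α : Type*} {Q T : List α} {a : α}
    (h : Q ++ [a] <:+: T) : Q <:+: T.dropLast := by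
  obtain ⟨s, t, rfl⟩ := h
  rcases t.eq_nil_or_concat with rfl | ⟨t', b, rfl⟩
  · exact ⟨s, [], by simp⟩
  · refine ⟨s, a :: t', ?_⟩
    rw [List.concat_eq_append, ← List.append_assoc, List.dropLast_concat]
    simp

theorem List.IsPrefix.exists_append_singleton {α : Type*} {Q L : List α} (h : Q <+: L)
    (hne : Q ≠ L) : ∃ d, Q ++ [d] <+: L := by
  obtain ⟨t, rfl⟩ := h
  cases t with
  | nil => simp at hne
  | cons d t => exact ⟨d, t, by simp⟩

theorem List.isInfix_of_prefix_drop {α : Type*} {Q T : List α} {k : ℕ} (h : Q <+: T.drop k) :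
    Q <:+: T :=
  h.isInfix.trans (List.drop_suffix k T).isInfix

theorem List.not_isSuffix_of_isInfix_append_singleton {α : Type*} {Q T : List α} {a : α}
    (hT : T ≠ []) (hlast : T.getLast hT ∉ T.dropLast) (hQ : Q ≠ [])
    (h : Q ++ [a] <:+: T) : ¬ Q <:+ T := by
  intro hsuf
  apply hlast
  rw [← hsuf.getLast hQ]
  exact h.dropLast_of_append_singleton.subset (Q.getLast_mem hQ)

theorem getLast_not_mem_dropLast_of_idx {T : List ℕ} (hT : T ≠ [])
    (h : ∀ i ∈ Finset.Icc 1 (T.length - 1), idx T i ≠ idx T T.length) :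
    T.getLast hT ∉ T.dropLast := by
  intro hmem
  obtain ⟨k, hk, hget⟩ := List.getElem_of_mem hmem
  have hk' : k < T.length - 1 := by rwa [List.length_dropLast] at hk
  apply h (k + 1) (Finset.mem_Icc.mpr ⟨by omega, by omega⟩)
  simp only [idx, Nat.add_sub_cancel]
  rw [List.getD_eq_getElem _ _ (by omega), List.getD_eq_getElem _ _ (by omega),
    ← List.getElem_dropLast hk, hget, List.getLast_eq_getElem]

theorem mem_OccF_iff {T Q : List ℕ} (hQ : Q ≠ []) {i : ℕ} :
    i ∈ OccF T Q ↔ 1 ≤ i ∧ Q <+: T.drop (i - 1) := by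
  have hpos : 0 < Q.length := List.length_pos_iff.mpr hQ
  simp only [OccF, Finset.mem_filter, Finset.mem_Icc]
  constructor
  · rintro ⟨⟨hi, -⟩, hpre⟩
    exact ⟨hi, hpre⟩
  · rintro ⟨hi, hpre⟩
    have hle := hpre.length_le
    rw [List.length_drop] at hle
    exact ⟨⟨hi, by omega⟩, hpre⟩

theorem two_le_ncard_childrenSet {σ : ℕ} {T P : List ℕ}
    (halpha : ∀ c ∈ T, c ∈ Finset.Icc 1 σ) {a b : ℕ} (hab : a ≠ b)
    (ha : P ++ [a] <:+: T) (hb : P ++ [b] <:+: T) :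
    2 ≤ (childrenSet σ T P).ncard := by
  have hfin : (childrenSet σ T P).Finite := by
    refine ((Set.finite_Icc 1 σ).image (fun d => P ++ [d])).subset ?_
    rintro Q ⟨d, hd, rfl, -⟩
    exact ⟨d, by simpa using hd, rfl⟩
  have mem_children : ∀ d, P ++ [d] <:+: T → P ++ [d] ∈ childrenSet σ T P := fun d hd =>
    ⟨d, halpha d (hd.subset (by simp)), rfl, hd⟩
  calc 2 = ({P ++ [a], P ++ [b]} : Set (List ℕ)).ncard := (Set.ncard_pair (by simpa)).symm
    _ ≤ (childrenSet σ T P).ncard := by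
      refine Set.ncard_le_ncard ?_ hfin
      rintro Q (rfl | rfl)
      exacts [mem_children a ha, mem_children b hb]

theorem stmt17_general
    (σ n : ℕ) (T : List ℕ)
    (hn : 2 ≤ n) (hlen : T.length = n)
    (halpha : ∀ c ∈ T, c ∈ Finset.Icc 1 σ)
    (hdollar : ∀ i ∈ Finset.Icc 1 (n - 1), idx T i ≠ idx T n)
    (c c' : ℕ)
    (P : List ℕ)
    (h1 : (OccF T (c :: (P ++ [c']))).card = 1)
    (h3 : 2 ≤ (OccF T (c :: P)).card) :
    2 ≤ (childrenSet σ T P).ncard := by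
  have hT : T ≠ [] := by rintro rfl; simp at hlen; omega
  have hlast := getLast_not_mem_dropLast_of_idx hT (by rwa [hlen])
  obtain ⟨i₀, hi₀⟩ := Finset.card_eq_one.mp h1
  have hcPc' : (c :: P) ++ [c'] <:+: T := by
    have := (mem_OccF_iff (List.cons_ne_nil _ _)).mp (hi₀ ▸ Finset.mem_singleton_self i₀)
    exact List.isInfix_of_prefix_drop this.2
  obtain ⟨i, hi, hne⟩ := Finset.exists_mem_ne (by omega : 1 < (OccF T (c :: P)).card) i₀
  obtain ⟨hi1, hpre⟩ := (mem_OccF_iff (List.cons_ne_nil _ _)).mp hi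
  have hnot_c' : ¬ (c :: P) ++ [c'] <+: T.drop (i - 1) := fun h =>
    hne (Finset.mem_singleton.mp (hi₀ ▸ (mem_OccF_iff (List.cons_ne_nil _ _)).mpr ⟨hi1, h⟩))
  have hnot_suffix : c :: P ≠ T.drop (i - 1) := fun h =>
    List.not_isSuffix_of_isInfix_append_singleton hT hlast (List.cons_ne_nil _ _) hcPc'
      (h ▸ List.drop_suffix _ _)
  obtain ⟨d, hd⟩ := hpre.exists_append_singleton hnot_suffix
  have hdc' : d ≠ c' := by rintro rfl; exact hnot_c' hd
  have child : ∀ e, (c :: P) ++ [e] <:+: T → P ++ [e] <:+: T := fun e h =>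
    (List.suffix_cons c _).isInfix.trans h
  exact two_le_ncard_childrenSet halpha hdc'
    (child d (List.isInfix_of_prefix_drop hd)) (child c' hcPc')

theorem stmt17
    (σ n : ℕ) (T : List ℕ)
    (hn : 2 ≤ n) (hlen : T.length = n)
    (halpha : ∀ c ∈ T, c ∈ Finset.Icc 1 σ)
    (hocc : ∀ c ∈ Finset.Icc 1 σ, c ∈ T)
    (hdollar : ∀ i ∈ Finset.Icc 1 (n - 1), idx T i ≠ idx T n)
    (c c' : ℕ) (hc : c ∈ Finset.Icc 1 σ) (hc' : c' ∈ Finset.Icc 1 σ)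
    (P : List ℕ) (hPalpha : ∀ a ∈ P, a ∈ Finset.Icc 1 σ)
    (h1 : (OccF T (c :: (P ++ [c']))).card = 1)
    (h2 : 2 ≤ (OccF T (P ++ [c'])).card)
    (h3 : 2 ≤ (OccF T (c :: P)).card) :
    2 ≤ (childrenSet σ T P).ncard :=
  stmt17_general σ n T hn hlen halpha hdollar c c' P h1 h3
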